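/- arXiv:1703.08525 — 4 statements merged into one kernel-verified Lean document; each statement's English description precedes it below -/
import Mathlib

section
/- Let V be a type with decidable equality, let K be a downward-closed set of finite subsets of V, let I be a nonempty finite index type, and let s, c : I → Finset V be families such that (a) the family {s i} is totally ordered by inclusion (for all i, j, either s i ⊆ s j or s j ⊆ s i), and (b) for every i, s i ∪ c i ∈ K. Then for every vertex u : V, the finset ((⋃_{i} s i) ∪ (⋂_{i} c i)) \ {u} belongs to K, where ⋃ and ⋂ denote the finite union and intersection of the families over I. (This is the inductive step of the paper's Lemma 1, 'All views and cores are simplexes': a process's new view, computed as the union of the snapshot's simplexes together with the intersection of the snapshot's cores, minus the vertex of its own color, is again a simplex of the subdivision.) -/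
/-- Inductive step of "All views and cores are simplexes": given simplexes `s i`
totally ordered by inclusion with `s i ∪ c i ∈ K`, the new view
`(⋃ i, s i) ∪ (⋂ i, c i) \ {u}` is again a simplex of `K`. -/
theorem view_is_simplex {V : Type*} [DecidableEq V] (K : Set (Finset V))
    (hK : ∀ σ ∈ K, ∀ τ ⊆ σ, τ ∈ K)
    {I : Type*} [Fintype I] [Nonempty I] (s c : I → Finset V)
    (hchain : ∀ i j : I, s i ⊆ s j ∨ s j ⊆ s i)
    (hsc : ∀ i : I, s i ∪ c i ∈ K) :
    ∀ u : V,
      ((Finset.univ.sup' Finset.univ_nonempty s) ∪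
        (Finset.univ.inf' Finset.univ_nonempty c)) \ {u} ∈ K := by
  intro u
  obtain ⟨i0, -, hmax⟩ := Finset.exists_max_image Finset.univ (fun i => (s i).card)
    Finset.univ_nonempty
  have hmax' : ∀ j, s j ⊆ s i0 := by
    intro j
    rcases hchain j i0 with h | h
    · exact h
    · exact Finset.eq_of_subset_of_card_le h (hmax j (Finset.mem_univ j)) ▸ h
  apply hK _ (hsc i0)
  apply Finset.Subset.trans (Finset.sdiff_subset)
  apply Finset.union_subset_union
  · exact Finset.sup'_le _ _ fun j _ => hmax' j
  · exact Finset.inf'_le c (Finset.mem_univ i0)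
end

section
/- Let V be a type, n a natural number, K a downward-closed set of finite subsets of V that is pure of dimension n (every σ ∈ K is contained in some φ ∈ K with card φ = n + 1), and χ : V → Fin (n+1) a coloring of K (χ is injective on every member of K). Then for every c ∈ K and every color p ∈ Fin (n+1) with p ∉ χ(c) (p is not the color of any vertex of c), there exists a vertex v ∈ V with χ(v) = p, v ∉ c, and c ∪ {v} ∈ K; equivalently, the link Lk(c, K) contains a vertex of color p. (This is the combinatorial content of the paper's Lemma 3: 'If process p has not decided by round r, then there is at least one vertex of its color in its convergence complex'.) -/
/-- Lemma 3 of the paper: in a pure `n`-dimensional chromatic complex, for every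
simplex `c` and every color `p` missing from `c`, the link of `c` contains a
vertex of color `p`. -/
theorem link_contains_missing_color {V : Type*} [DecidableEq V] (n : ℕ)
    (K : Set (Finset V))
    (hK : ∀ σ ∈ K, ∀ τ ⊆ σ, τ ∈ K)
    (hpure : ∀ σ ∈ K, ∃ φ ∈ K, σ ⊆ φ ∧ φ.card = n + 1)
    (χ : V → Fin (n + 1))
    (hcolor : ∀ σ ∈ K, Set.InjOn χ (σ : Set V)) :
    ∀ c ∈ K, ∀ p : Fin (n + 1), (∀ w ∈ c, χ w ≠ p) →
      ∃ v : V, χ v = p ∧ v ∉ c ∧ c ∪ {v} ∈ K := by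
  intro c hc p hp
  obtain ⟨φ, hφK, hsub, hcard⟩ := hpure c hc
  have hinj : Set.InjOn χ (φ : Set V) := hcolor φ hφK
  have himg : (φ.image χ).card = n + 1 := by
    rw [Finset.card_image_of_injOn hinj, hcard]
  have huniv : φ.image χ = Finset.univ :=
    Finset.eq_univ_of_card _ (by simp [himg])
  have hpmem : p ∈ φ.image χ := huniv ▸ Finset.mem_univ p
  obtain ⟨v, hvφ, hvp⟩ := Finset.mem_image.mp hpmem
  refine ⟨v, hvp, fun hvc => hp v hvc hvp, ?_⟩
  exact hK φ hφK _ (Finset.union_subset hsub (by simpa using hvφ))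
end

section
/- Let V be a type, n a natural number, K a downward-closed set of finite subsets of V that is pure of dimension n, and χ : V → Fin (n+1) a coloring of K (injective on every member of K). Then for every c ∈ K, the set of colors of vertices of the link of c is exactly the complement of the set of colors of c: {p : Fin (n+1) | ∃ v, v ∉ c ∧ c ∪ {v} ∈ K ∧ χ(v) = p} = (Set.univ : Set (Fin (n+1))) \ {p | ∃ w ∈ c, χ(w) = p}. (This is the claim used in the paper's termination theorem: 'the link contains vertexes of color exactly those not in the corresponding core'.) -/
/-- In a pure `n`-dimensional chromatic complex, the set of colors of vertices
of the link of a simplex `c` is exactly the complement of the set of colors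
of `c`. -/
theorem link_colors_eq_compl {V : Type*} [DecidableEq V] (n : ℕ)
    (K : Set (Finset V))
    (hK : ∀ σ ∈ K, ∀ τ ⊆ σ, τ ∈ K)
    (hpure : ∀ σ ∈ K, ∃ φ ∈ K, σ ⊆ φ ∧ φ.card = n + 1)
    (χ : V → Fin (n + 1))
    (hcolor : ∀ σ ∈ K, Set.InjOn χ (σ : Set V)) :
    ∀ c ∈ K,
      {p : Fin (n + 1) | ∃ v : V, v ∉ c ∧ c ∪ {v} ∈ K ∧ χ v = p} =
        (Set.univ : Set (Fin (n + 1))) \ {p | ∃ w ∈ c, χ w = p} := by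
  intro c hc
  ext p
  simp only [Set.mem_setOf_eq, Set.mem_diff, Set.mem_univ, true_and]
  constructor
  · rintro ⟨v, hv, hcv, rfl⟩ ⟨w, hw, hwv⟩
    have : w = v := hcolor _ hcv (by simp [hw]) (by simp) hwv
    exact hv (this ▸ hw)
  · intro hp
    obtain ⟨φ, hφ, hsub, hcard⟩ := hpure c hc
    have hsurj : Finset.image χ φ = Finset.univ := by
      apply Finset.eq_univ_of_card
      rw [Finset.card_image_of_injOn (hcolor _ hφ), hcard, Fintype.card_fin]
    have : p ∈ Finset.image χ φ := hsurj ▸ Finset.mem_univ p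
    obtain ⟨v, hvφ, hvp⟩ := Finset.mem_image.mp this
    refine ⟨v, fun hvc => hp ⟨v, hvc, hvp⟩, hK _ hφ _ ?_, hvp⟩
    exact Finset.union_subset hsub (by simpa using hvφ)
end

section
/- Let V be a type with decidable equality, let J be an index type, let c : J → Finset V be a family of finsets, and let P : J → Set (Finset V) be a family of downward-closed sets of finsets. Then for all nonempty finite subsets S ⊆ T of J, Lk(⋂_{j ∈ S} c j, ⋃_{j ∈ S} P j) ⊆ Lk(⋂_{j ∈ T} c j, ⋃_{j ∈ T} P j). (This is the monotonicity claim in the paper's Lemma 5 showing that the output specification Γ(σ) = Lk(⋂ cᵢ, ⋃ Pᵢ) of the link-based non-chromatic simplex agreement task is a carrier map.) -/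
/-- The link of a finset `σ` in a set of finsets `K`:
`Lk(σ, K) = {τ ∈ K | τ ∩ σ = ∅ ∧ τ ∪ σ ∈ K}`. -/
def Lk {V : Type*} [DecidableEq V] (σ : Finset V) (K : Set (Finset V)) : Set (Finset V) :=
  {τ | τ ∈ K ∧ τ ∩ σ = ∅ ∧ τ ∪ σ ∈ K}

/-- Monotonicity of the LNCSA carrier map `Γ(σ) = Lk(⋂ cᵢ, ⋃ Pᵢ)`. -/
theorem lncsa_carrier_monotone {V : Type*} [DecidableEq V] {J : Type*}
    (c : J → Finset V) (P : J → Set (Finset V))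
    (hP : ∀ j : J, ∀ σ ∈ P j, ∀ τ ⊆ σ, τ ∈ P j) :
    ∀ S T : Finset J, ∀ hS : S.Nonempty, ∀ hST : S ⊆ T,
      Lk (S.inf' hS c) (⋃ j ∈ S, P j) ⊆
        Lk (T.inf' (hS.mono hST) c) (⋃ j ∈ T, P j) := by
  intro S T hS hST τ hτ
  obtain ⟨hmem, hdisj, hun⟩ := hτ
  have hσ : T.inf' (hS.mono hST) c ≤ S.inf' hS c := by
    apply Finset.le_inf'
    intro j hj
    exact Finset.inf'_le _ (hST hj)
  have hKmono : (⋃ j ∈ S, P j) ⊆ ⋃ j ∈ T, P j := by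
    apply Set.biUnion_subset_biUnion_left
    exact hST
  refine ⟨hKmono hmem, ?_, ?_⟩
  · have : τ ∩ T.inf' (hS.mono hST) c ⊆ τ ∩ S.inf' hS c :=
      Finset.inter_subset_inter le_rfl hσ
    rw [hdisj] at this
    exact Finset.subset_empty.mp this
  · obtain ⟨Pj, ⟨j, rfl⟩, hPj⟩ := hun
    simp only [Set.mem_iUnion] at hPj ⊢
    obtain ⟨hj, hmemP⟩ := hPj
    exact ⟨j, hST hj, hP j _ hmemP _ (Finset.union_subset_union le_rfl hσ)⟩
end
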